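/- Let V be a finite-dimensional vector space over ℚ, and let (x₀⁽¹⁾; e⁽¹⁾), …, (x₀⁽ᵏ⁾; e⁽ᵏ⁾) be simple-sector data in V whose associated simple sectors are pairwise disjoint, with union Σ. If there exists a nonzero x ∈ V with Σ + x = Σ (i.e. the translate of Σ by x equals Σ), then ∑_{i=1}^{k} S(x₀⁽ⁱ⁾; e⁽ⁱ⁾) = 0 in the fraction field ℚ(V) of the group algebra ℚ[V]. -/

import Mathlib

/-- The group algebra `ℚ[V]` of a ℚ-vector space `V` is an integral domain
(it has no zero divisors since `V` has unique sums, being torsion-free). -/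
instance (V : Type*) [AddCommGroup V] [Module ℚ V] : IsDomain (AddMonoidAlgebra ℚ V) :=
  NoZeroDivisors.to_isDomain _

/-- The simple sector associated to a datum `(x₀; e₁, …, e_m)`:
the set `{x₀ + a₁e₁ + ⋯ + a_m e_m : aᵢ ∈ ℤ, aᵢ ≥ 0}`. -/
def simpleSector {V : Type*} [AddCommGroup V] [Module ℚ V] {m : ℕ}
    (x₀ : V) (e : Fin m → V) : Set V :=
  {y | ∃ a : Fin m → ℕ, y = x₀ + ∑ i, a i • e i}

/-- The element `S(x₀; e) = e^{x₀} / ∏ᵢ (1 − e^{eᵢ})` of the fraction field `ℚ(V)`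
of the group algebra `ℚ[V]` associated to a simple-sector datum `(x₀; e₁, …, e_m)`. -/
noncomputable def Sfrac {V : Type*} [AddCommGroup V] [Module ℚ V] {m : ℕ}
    (x₀ : V) (e : Fin m → V) : FractionRing (AddMonoidAlgebra ℚ V) :=
  algebraMap (AddMonoidAlgebra ℚ V) (FractionRing (AddMonoidAlgebra ℚ V))
      (AddMonoidAlgebra.single x₀ 1) /
    ∏ i, (1 - algebraMap (AddMonoidAlgebra ℚ V) (FractionRing (AddMonoidAlgebra ℚ V))
      (AddMonoidAlgebra.single (e i) 1))

/-!
The group algebra `ℚ[V]` acts on *all* functions `V → ℚ` (not only finitely supported ones) by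
convolution, `(p ⋆ f)(y) = ∑_w p(w) f(y - w)`, so indicators of infinite sectors can be multiplied
by elements of `ℚ[V]`. Inclusion–exclusion over the generators shows that the denominator
`∏ⱼ (1 - e^{eⱼ})` sends the indicator of a simple sector to the point mass at its apex. As the
sectors are disjoint, `1_Σ` is the sum of their indicators; hence, if `D` is the product of all the
denominators and `∑ᵢ S(x₀⁽ⁱ⁾; e⁽ⁱ⁾) = N / D`, then `D ⋆ 1_Σ = N ⋆ δ₀`.
Translation invariance gives `(1 - e^v) ⋆ 1_Σ = 0`, so `(1 - e^v) N ⋆ δ₀ = D ⋆ (1 - e^v) ⋆ 1_Σ = 0`,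
i.e. `(1 - e^v) N = 0`; since `ℚ[V]` is a domain and `v ≠ 0`, `N = 0`.
-/

open Finset AddMonoidAlgebra

namespace AddMonoidAlgebra

variable {R V : Type*} [CommRing R] [AddCommGroup V]

variable (R V) in
noncomputable def convAction : R[V] →ₐ[R] Module.End R (V → R) :=
  lift R (Module.End R (V → R)) V
    { toFun := fun w => LinearMap.funLeft R R (· - w.toAdd)
      map_one' := by ext f y; simp
      map_mul' := fun a b => by ext f y; simp [sub_sub] }

theorem convAction_single (w : V) (r : R) (f : V → R) (y : V) :
    convAction R V (single w r) f y = r * f (y - w) := by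
  simp [convAction]

theorem prod_one_sub_single {ι : Type*} (s : Finset ι) (g : ι → V) :
    ∏ t ∈ s, (1 - single (g t) (1 : R)) =
      ∑ C ∈ s.powerset, single (∑ t ∈ C, g t) ((-1) ^ #C) := by
  classical
  have h : ∀ t, 1 - single (g t) (1 : R) = single (g t) (-1) + 1 := fun t => by
    rw [single_neg]; abel
  simp_rw [h, prod_add, prod_const_one, mul_one, prod_single, prod_const]

theorem convAction_prod_one_sub_single_apply {ι : Type*} (s : Finset ι) (g : ι → V)
    (f : V → R) (y : V) :
    convAction R V (∏ t ∈ s, (1 - single (g t) 1)) f y =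
      ∑ C ∈ s.powerset, (-1) ^ #C * f (y - ∑ t ∈ C, g t) := by
  simp [prod_one_sub_single, LinearMap.sum_apply, Finset.sum_apply, convAction_single]

theorem one_sub_single_ne_zero [Nontrivial R] {w : V} (hw : w ≠ 0) :
    (1 : R[V]) - single w 1 ≠ 0 := by
  rw [sub_ne_zero, one_def]
  exact fun h => hw (single_left_injective one_ne_zero h).symm

theorem convAction_one_sub_single_indicator {s : Set V} {v : V} (hs : (· + v) '' s = s) :
    convAction R V (1 - single v 1) (s.indicator 1) = 0 := by
  ext y
  have hmem : y - v ∈ s ↔ y ∈ s := by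
    conv_rhs => rw [← hs, Set.image_add_right]
    simp [sub_eq_add_neg]
  simp only [map_sub, map_one, LinearMap.sub_apply, Module.End.one_apply, Pi.sub_apply,
    convAction_single, one_mul, Pi.zero_apply, sub_eq_zero]
  by_cases hy : y ∈ s
  · rw [Set.indicator_of_mem hy, Set.indicator_of_mem (hmem.2 hy)]
    rfl
  · rw [Set.indicator_of_notMem hy, Set.indicator_of_notMem (mt hmem.1 hy)]

variable [DecidableEq V]

theorem convAction_apply_single_zero (p : R[V]) :
    convAction R V p (Pi.single 0 1) = p.coeff := by
  induction p using induction_linear with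
  | zero => simp
  | add p q hp hq => simp [hp, hq]
  | single w r =>
    ext y
    simp [convAction_single, Pi.single_apply, sub_eq_zero, Finsupp.single_apply, eq_comm]

theorem eq_zero_of_convAction_apply_single_zero {p : R[V]}
    (hp : convAction R V p (Pi.single 0 1) = 0) : p = 0 := by
  rw [convAction_apply_single_zero] at hp
  exact coeff_eq_zero.1 (DFunLike.coe_injective hp)

theorem convAction_single_apply_single_zero (x : V) :
    convAction R V (single x 1) (Pi.single 0 1) = Pi.single x 1 := by
  ext y
  simp [convAction_single, Pi.single_apply, sub_eq_zero]

end AddMonoidAlgebra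

theorem Finset.sum_powerset_neg_one_pow_card' {R α : Type*} [Ring R] [DecidableEq α]
    (s : Finset α) : ∑ t ∈ s.powerset, (-1 : R) ^ #t = if s = ∅ then 1 else 0 := by
  have h := congrArg (Int.cast : ℤ → R) (sum_powerset_neg_one_pow_card (x := s))
  rw [Int.cast_sum, apply_ite Int.cast, Int.cast_one, Int.cast_zero] at h
  simpa only [Int.cast_pow, Int.cast_neg, Int.cast_one] using h

theorem Finset.sum_eq_sum_ite_nsmul {ι M : Type*} [Fintype ι] [DecidableEq ι] [AddCommMonoid M]
    (C : Finset ι) (f : ι → M) : ∑ i ∈ C, f i = ∑ i, (if i ∈ C then 1 else 0) • f i := by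
  simp [ite_smul]

section SimpleSector

variable {V : Type*} [AddCommGroup V] [Module ℚ V] {m : ℕ} {x₀ : V} {e : Fin m → V}

theorem LinearIndependent.sum_nsmul_injective (he : LinearIndependent ℚ e) :
    Function.Injective fun a : Fin m → ℕ => ∑ i, a i • e i := by
  intro a b h
  have := Fintype.linearIndependent_iffₛ.1 he (fun i => (a i : ℚ)) (fun i => (b i : ℚ))
    (by simpa only [Nat.cast_smul_eq_nsmul] using h)
  exact funext fun i => by exact_mod_cast this i

theorem sub_sum_nsmul_mem_simpleSector_iff (y : V) (c : Fin m → ℕ) :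
    y - ∑ i, c i • e i ∈ simpleSector x₀ e ↔ ∃ a : Fin m → ℕ, y = x₀ + ∑ i, (a + c) i • e i := by
  simp only [simpleSector, Set.mem_ofPred_eq, Pi.add_apply, add_nsmul, sum_add_distrib,
    sub_eq_iff_eq_add, add_assoc]

theorem add_sum_nsmul_sub_mem_simpleSector_iff (he : LinearIndependent ℚ e) (b c : Fin m → ℕ) :
    x₀ + ∑ i, b i • e i - ∑ i, c i • e i ∈ simpleSector x₀ e ↔ c ≤ b := by
  simp only [sub_sum_nsmul_mem_simpleSector_iff, add_right_inj, he.sum_nsmul_injective.eq_iff,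
    le_iff_exists_add']

theorem mem_simpleSector_of_sub_sum_mem {y : V} {C : Finset (Fin m)}
    (h : y - ∑ i ∈ C, e i ∈ simpleSector x₀ e) : y ∈ simpleSector x₀ e := by
  rw [sum_eq_sum_ite_nsmul, sub_sum_nsmul_mem_simpleSector_iff] at h
  obtain ⟨a, rfl⟩ := h
  exact ⟨_, rfl⟩

theorem add_sum_nsmul_sub_sum_mem_simpleSector_iff (he : LinearIndependent ℚ e)
    (b : Fin m → ℕ) (C : Finset (Fin m)) :
    x₀ + ∑ i, b i • e i - ∑ i ∈ C, e i ∈ simpleSector x₀ e ↔ C ⊆ univ.filter (b · ≠ 0) := by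
  rw [sum_eq_sum_ite_nsmul C e, add_sum_nsmul_sub_mem_simpleSector_iff he]
  refine ⟨fun h i hi => ?_, fun h i => ?_⟩
  · simpa [hi, Nat.one_le_iff_ne_zero] using h i
  · dsimp only
    split_ifs with hi
    · exact Nat.one_le_iff_ne_zero.2 (by simpa using h hi)
    · exact Nat.zero_le _

theorem sum_powerset_indicator_simpleSector [DecidableEq V] {R : Type*} [CommRing R]
    (he : LinearIndependent ℚ e) (y : V) :
    ∑ C ∈ (univ : Finset (Fin m)).powerset,
        (-1) ^ #C * (simpleSector x₀ e).indicator (1 : V → R) (y - ∑ i ∈ C, e i) =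
      (Pi.single x₀ 1 : V → R) y := by
  by_cases hy : y ∈ simpleSector x₀ e
  swap
  · have hy₀ : y ≠ x₀ := fun h => hy ⟨0, by simp [h]⟩
    rw [Pi.single_eq_of_ne hy₀, sum_eq_zero fun C _ => ?_]
    rw [Set.indicator_of_notMem (mt mem_simpleSector_of_sub_sum_mem hy), mul_zero]
  obtain ⟨b, rfl⟩ := hy
  -- only the subsets `C` of the support of `b` contribute, and these cancel unless `b = 0`
  have hb : x₀ + ∑ i, b i • e i = x₀ ↔ univ.filter (b · ≠ 0) = ∅ := by
    rw [add_eq_left, he.sum_nsmul_injective.eq_iff' (b := 0) (by simp)]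
    simp [funext_iff, filter_eq_empty_iff]
  classical
  simp_rw [Set.indicator_apply, add_sum_nsmul_sub_sum_mem_simpleSector_iff he, Pi.one_apply,
    mul_ite, mul_one, mul_zero]
  rw [← sum_filter, show univ.powerset.filter (· ⊆ univ.filter (b · ≠ 0)) =
    (univ.filter (b · ≠ 0)).powerset by ext; simp]
  simp only [sum_powerset_neg_one_pow_card', Pi.single_apply, hb]

end SimpleSector

section SectorDenom

variable {V : Type*} [AddCommGroup V] [Module ℚ V]

noncomputable def sectorDenom {m : ℕ} (e : Fin m → V) : ℚ[V] :=
  ∏ i, (1 - single (e i) 1)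

theorem sectorDenom_ne_zero {m : ℕ} {e : Fin m → V} (he : ∀ i, e i ≠ 0) : sectorDenom e ≠ 0 :=
  prod_ne_zero_iff.2 fun i _ => one_sub_single_ne_zero (he i)

theorem Sfrac_eq_div {m : ℕ} (x₀ : V) (e : Fin m → V) :
    Sfrac x₀ e = algebraMap ℚ[V] (FractionRing ℚ[V]) (single x₀ 1) /
      algebraMap ℚ[V] (FractionRing ℚ[V]) (sectorDenom e) := by
  simp [Sfrac, sectorDenom, map_prod]

theorem sum_Sfrac_mul_prod_sectorDenom {ι : Type*} [Fintype ι] [DecidableEq ι] {n : ι → ℕ}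
    (x : ι → V) (e : ∀ i, Fin (n i) → V) (he : ∀ i j, e i j ≠ 0) :
    (∑ i, Sfrac (x i) (e i)) * algebraMap ℚ[V] (FractionRing ℚ[V]) (∏ i, sectorDenom (e i)) =
      algebraMap ℚ[V] (FractionRing ℚ[V])
        (∑ i, (∏ j ∈ univ.erase i, sectorDenom (e j)) * single (x i) 1) := by
  have hd : ∀ i, algebraMap ℚ[V] (FractionRing ℚ[V]) (sectorDenom (e i)) ≠ 0 := fun i =>
    (map_ne_zero_iff _ (IsFractionRing.injective _ _)).2 (sectorDenom_ne_zero (he i))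
  simp only [sum_mul, map_sum, map_mul, Sfrac_eq_div]
  refine sum_congr rfl fun i _ => ?_
  rw [← mul_prod_erase univ _ (mem_univ i), map_mul]
  field_simp [hd i]

variable [DecidableEq V]

theorem convAction_sectorDenom_indicator {m : ℕ} {x₀ : V} {e : Fin m → V}
    (he : LinearIndependent ℚ e) :
    convAction ℚ V (sectorDenom e) ((simpleSector x₀ e).indicator 1) = Pi.single x₀ 1 := by
  ext y
  rw [sectorDenom, convAction_prod_one_sub_single_apply]
  exact sum_powerset_indicator_simpleSector he y

theorem convAction_prod_sectorDenom_indicator_iUnion {ι : Type*} [Fintype ι] [DecidableEq ι]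
    {n : ι → ℕ} (x : ι → V) (e : ∀ i, Fin (n i) → V) (he : ∀ i, LinearIndependent ℚ (e i))
    (hd : Pairwise fun i j => Disjoint (simpleSector (x i) (e i)) (simpleSector (x j) (e j))) :
    convAction ℚ V (∏ i, sectorDenom (e i)) ((⋃ i, simpleSector (x i) (e i)).indicator 1) =
      convAction ℚ V (∑ i, (∏ j ∈ univ.erase i, sectorDenom (e j)) * single (x i) 1)
        (Pi.single 0 1) := by
  have hunion : (⋃ i, simpleSector (x i) (e i)).indicator (1 : V → ℚ) =
      ∑ i, (simpleSector (x i) (e i)).indicator 1 := by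
    ext y
    simpa using congrFun (indicator_biUnion univ _ fun i _ j _ hij => hd hij) y
  rw [hunion, map_sum, map_sum, LinearMap.sum_apply]
  refine sum_congr rfl fun i _ => ?_
  rw [← mul_prod_erase univ _ (mem_univ i), mul_comm, map_mul, map_mul, Module.End.mul_apply,
    Module.End.mul_apply, convAction_sectorDenom_indicator (he i),
    convAction_single_apply_single_zero]

end SectorDenom

theorem Sfrac_sum_eq_zero_of_translation_invariant_general
    (V : Type*) [AddCommGroup V] [Module ℚ V]
    (k : ℕ) (x : Fin k → V) (n : Fin k → ℕ) (e : (i : Fin k) → Fin (n i) → V)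
    (he : ∀ i, LinearIndependent ℚ (e i))
    (hd : ∀ i i', i ≠ i' → Disjoint (simpleSector (x i) (e i)) (simpleSector (x i') (e i')))
    (v : V) (hv : v ≠ 0)
    (htrans : (fun y => y + v) '' (⋃ i, simpleSector (x i) (e i)) =
      ⋃ i, simpleSector (x i) (e i)) :
    ∑ i, Sfrac (x i) (e i) = 0 := by
  classical
  set S := ⋃ i, simpleSector (x i) (e i)
  set D := ∏ i, sectorDenom (e i)
  have hprod := sum_Sfrac_mul_prod_sectorDenom x e fun i => (he i).ne_zero
  set N := ∑ i, (∏ j ∈ univ.erase i, sectorDenom (e j)) * single (x i) 1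
  have hN : convAction ℚ V D (S.indicator 1) = convAction ℚ V N (Pi.single 0 1) :=
    convAction_prod_sectorDenom_indicator_iUnion x e he hd
  have hvN : (1 - single v 1) * N = 0 := by
    apply eq_zero_of_convAction_apply_single_zero
    calc convAction ℚ V ((1 - single v 1) * N) (Pi.single 0 1)
        = convAction ℚ V (D * (1 - single v 1)) (S.indicator 1) := by
          rw [map_mul, Module.End.mul_apply, ← hN, ← Module.End.mul_apply, ← map_mul, mul_comm]
      _ = 0 := by
          rw [map_mul, Module.End.mul_apply, convAction_one_sub_single_indicator htrans, map_zero]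
  have hN0 : N = 0 := (mul_eq_zero.1 hvN).resolve_left (one_sub_single_ne_zero hv)
  have hD : algebraMap ℚ[V] (FractionRing ℚ[V]) D ≠ 0 :=
    (map_ne_zero_iff _ (IsFractionRing.injective _ _)).2
      (prod_ne_zero_iff.2 fun i _ => sectorDenom_ne_zero (he i).ne_zero)
  rw [hN0, map_zero] at hprod
  exact (mul_eq_zero.1 hprod).resolve_right hD

/-- If a finite pairwise-disjoint union `Σ` of simple sectors in a finite-dimensional
ℚ-vector space is invariant under translation by some nonzero vector `v`, then the
sum `∑ᵢ S(x₀⁽ⁱ⁾; e⁽ⁱ⁾)` vanishes in the fraction field `ℚ(V)` of `ℚ[V]`. -/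
theorem Sfrac_sum_eq_zero_of_translation_invariant
    (V : Type*) [AddCommGroup V] [Module ℚ V] [FiniteDimensional ℚ V]
    (k : ℕ) (x : Fin k → V) (n : Fin k → ℕ) (e : (i : Fin k) → Fin (n i) → V)
    (he : ∀ i, LinearIndependent ℚ (e i))
    (hd : ∀ i i', i ≠ i' → Disjoint (simpleSector (x i) (e i)) (simpleSector (x i') (e i')))
    (v : V) (hv : v ≠ 0)
    (htrans : (fun y => y + v) '' (⋃ i, simpleSector (x i) (e i)) =
      ⋃ i, simpleSector (x i) (e i)) :
    ∑ i, Sfrac (x i) (e i) = 0 :=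
  Sfrac_sum_eq_zero_of_translation_invariant_general V k x n e he hd v hv htrans
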